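/- Let R ⊆ ℕ be a set of Bohr recurrence. Then for every ε > 0 and every d ∈ ℕ, there exists N ∈ ℕ such that for every α ∈ ℝ^d there exists r ∈ R with r ≤ N such that every coordinate of rα is within ε of an integer. -/

import Mathlib

/-- A set `R ⊆ ℕ` is a set of Bohr recurrence if for every `d`, every `α ∈ ℝ^d`
and every `ε > 0`, there is `r ∈ R` such that every coordinate of `rα` is within
`ε` of an integer. -/
def BohrRecurrence (R : Set ℕ) : Prop :=
  ∀ (d : ℕ) (α : Fin d → ℝ) (ε : ℝ), 0 < ε →
    ∃ r ∈ R, ∀ i : Fin d, ∃ k : ℤ, |(r : ℝ) * α i - (k : ℝ)| < ε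

/-!
The sets `U N` of `α` for which some `r ∈ R` with `r ≤ N` brings every coordinate of `rα`
within `ε` of an integer are open and increase with `N`. Bohr recurrence says they cover
`[0,1]^d`, so by compactness one of them already contains the whole cube. Since the condition
only depends on `α` modulo `ℤ^d`, the same `N` works for every `α`.
-/

open Set

lemma exists_int_abs_mul_sub_lt_of_fract {n : ℤ} {x ε : ℝ}
    (h : ∃ k : ℤ, |n * Int.fract x - k| < ε) : ∃ k : ℤ, |n * x - k| < ε := by
  obtain ⟨k, hk⟩ := h
  refine ⟨k + n * ⌊x⌋, ?_⟩
  convert hk using 2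
  rw [← Int.self_sub_floor]
  push_cast
  ring

lemma isOpen_setOf_forall_exists_int_abs_mul_sub_lt {ι : Type*} [Finite ι] (t ε : ℝ) :
    IsOpen {α : ι → ℝ | ∀ i, ∃ k : ℤ, |t * α i - k| < ε} := by
  simp only [ofPred_forall, ofPred_exists]
  exact isOpen_iInter_of_finite fun i => isOpen_iUnion fun k =>
    isOpen_lt (by fun_prop) continuous_const

theorem bohr_recurrence_uniform_bound (R : Set ℕ) (hR : BohrRecurrence R)
    (ε : ℝ) (hε : 0 < ε) (d : ℕ) :
    ∃ N : ℕ, ∀ α : Fin d → ℝ,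
      ∃ r ∈ R, r ≤ N ∧ ∀ i : Fin d, ∃ k : ℤ, |(r : ℝ) * α i - (k : ℝ)| < ε := by
  set U : ℕ → Set (Fin d → ℝ) := fun N =>
    ⋃ r ∈ {r ∈ R | r ≤ N}, {α | ∀ i, ∃ k : ℤ, |(r : ℝ) * α i - k| < ε}
  have hUopen : ∀ N, IsOpen (U N) := fun N =>
    isOpen_biUnion fun r _ => isOpen_setOf_forall_exists_int_abs_mul_sub_lt _ _
  have hUmono : Monotone U := fun M N hMN =>
    biUnion_subset_biUnion_left fun r hr => ⟨hr.1, hr.2.trans hMN⟩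
  have hcover : univ.pi (fun _ => Icc (0 : ℝ) 1) ⊆ ⋃ N, U N := fun α _ => by
    obtain ⟨r, hrR, hr⟩ := hR d α ε hε
    exact mem_iUnion.2 ⟨r, mem_biUnion ⟨hrR, le_rfl⟩ hr⟩
  obtain ⟨N, hN⟩ := (isCompact_univ_pi fun _ => isCompact_Icc).elim_directed_cover U hUopen
    hcover hUmono.directed_le
  refine ⟨N, fun α => ?_⟩
  have hfract : (fun i => Int.fract (α i)) ∈ univ.pi (fun _ => Icc (0 : ℝ) 1) :=
    fun i _ => ⟨Int.fract_nonneg _, (Int.fract_lt_one _).le⟩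
  obtain ⟨r, ⟨hrR, hrN⟩, hr⟩ := mem_iUnion₂.1 (hN hfract)
  exact ⟨r, hrR, hrN, fun i => by
    exact_mod_cast exists_int_abs_mul_sub_lt_of_fract (n := r) (hr i)⟩
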